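/- With r₀ = w₂ ∘ w₃ ∘ w₂ : L → L, one has φ² ∘ r₀ ∘ φ² = r₀; equivalently, r₀ conjugates φ² to its inverse (so r₀ does not commute with φ²). -/

import Mathlib

/-!
The ten hypotheses pin `φ` down as the map of an explicit integer matrix. Conjugating a
reflection by a reflection, `r₀ = w₂ w₃ w₂` is the reflection in the root `α₂ + α₃`, and
`φ² r₀ φ² = r₀` is then checked on the basis. If `r₀` commuted with `φ²`, this identity and
`r₀² = 1` would force `φ⁴ = 1`, which fails already at `H₀`.
-/

open scoped BigOperators

/-- The Picard lattice of the blown-up surface: free ℤ-module with basis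
`H₀,H₁,E₁,…,E₈`, realized as coordinates `0,1,2,…,9` of `Fin 10 → ℤ`. -/
abbrev L : Type := Fin 10 → ℤ

def H0 : L := Pi.single 0 1
def H1 : L := Pi.single 1 1
def E1 : L := Pi.single 2 1
def E2 : L := Pi.single 3 1
def E3 : L := Pi.single 4 1
def E4 : L := Pi.single 5 1
def E5 : L := Pi.single 6 1
def E6 : L := Pi.single 7 1
def E7 : L := Pi.single 8 1
def E8 : L := Pi.single 9 1

/-- The intersection form: `⟨H₀,H₁⟩ = 1`, `⟨H_i,H_i⟩ = 0`, `⟨E_k,E_l⟩ = -δ_{kl}`,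
`⟨H_i,E_k⟩ = 0`. -/
def ip (x y : L) : ℤ :=
  x 0 * y 1 + x 1 * y 0 - x 2 * y 2 - x 3 * y 3 - x 4 * y 4 - x 5 * y 5
    - x 6 * y 6 - x 7 * y 7 - x 8 * y 8 - x 9 * y 9

lemma ip_add_left (x y v : L) : ip (x + y) v = ip x v + ip y v := by
  simp only [ip, Pi.add_apply]; ring

lemma ip_smul_left (c : ℤ) (x v : L) : ip (c • x) v = c * ip x v := by
  simp only [ip, Pi.smul_apply, smul_eq_mul]; ring

/-- The reflection `x ↦ x + ⟨x,v⟩ v` associated to a vector `v` with `⟨v,v⟩ = -2`. -/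
def reflV (v : L) : L →ₗ[ℤ] L where
  toFun x := x + ip x v • v
  map_add' x y := by
    show x + y + ip (x + y) v • v = (x + ip x v • v) + (y + ip y v • v)
    rw [ip_add_left, add_smul]; abel
  map_smul' c x := by
    show c • x + ip (c • x) v • v = c • (x + ip x v • v)
    rw [ip_smul_left, mul_smul, smul_add]

-- simple roots
def al0 : L := E5 - E6
def al1 : L := E1 - E2
def al2 : L := H1 - E1 - E5
def al3 : L := H0 - E3 - E7
def al4 : L := E3 - E4
def al5 : L := E7 - E8

/-- The root lattice `Q = ℤα₀ + ⋯ + ℤα₅`. -/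
def Q : Submodule ℤ L := Submodule.span ℤ {al0, al1, al2, al3, al4, al5}

-- the simple reflections w_i
def w0 : L →ₗ[ℤ] L := reflV al0
def w1 : L →ₗ[ℤ] L := reflV al1
def w2 : L →ₗ[ℤ] L := reflV al2
def w3 : L →ₗ[ℤ] L := reflV al3
def w4 : L →ₗ[ℤ] L := reflV al4
def w5 : L →ₗ[ℤ] L := reflV al5

/-- `σ₁₀`: exchanges `E₁↔E₅`, `E₂↔E₆`. -/
def sig10 : L →ₗ[ℤ] L := LinearMap.funLeft ℤ ℤ ![0, 1, 6, 7, 4, 5, 2, 3, 8, 9]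

/-- `σ₅₄₃₂₁₀`: exchanges `H₀↔H₁`, `E₁↔E₃`, `E₂↔E₄`, `E₅↔E₇`, `E₆↔E₈`. -/
def sig543210 : L →ₗ[ℤ] L := LinearMap.funLeft ℤ ℤ ![1, 0, 4, 5, 2, 3, 8, 9, 6, 7]

/-- `σ₅₄ = σ₅₄₃₂₁₀ ∘ σ₁₀ ∘ σ₅₄₃₂₁₀`: exchanges `E₃↔E₇`, `E₄↔E₈`. -/
def sig54 : L →ₗ[ℤ] L := sig543210 ∘ₗ sig10 ∘ₗ sig543210

-- components of the anticanonical divisor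
def D0 : L := H0 - E1 - E2
def D1 : L := H1 - E3 - E4
def D2 : L := H0 - E5 - E6
def D3 : L := H1 - E7 - E8

/-- The anticanonical class `δ = -K_X = 2H₀+2H₁-E₁-⋯-E₈`. -/
def delta : L := 2 • H0 + 2 • H1 - E1 - E2 - E3 - E4 - E5 - E6 - E7 - E8

/-- `K' = α₀+α₁+2α₂+2α₃+α₄+α₅`, the canonical central element. -/
def Kp : L := al0 + al1 + 2 • al2 + 2 • al3 + al4 + al5

-- β and γ roots
def b0 : L := al3 + al5
def b1 : L := al1 + al2
def b2 : L := al3 + al4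
def b3 : L := al0 + al2
def g0 : L := al0 + al1 + al2 + al3
def g1 : L := al2 + al3 + al4 + al5

/-- The sublattice `Q_B ⊆ Q` of elements `∑ aᵢαᵢ` with `a₀+a₁-a₂-a₃+a₄+a₅ = 0`. -/
def QB : Set L :=
  {x | ∃ a₀ a₁ a₂ a₃ a₄ a₅ : ℤ,
    x = a₀ • al0 + a₁ • al1 + a₂ • al2 + a₃ • al3 + a₄ • al4 + a₅ • al5 ∧
    a₀ + a₁ - a₂ - a₃ + a₄ + a₅ = 0}

lemma ip_comm (x y : L) : ip x y = ip y x := by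
  unfold ip; ring

lemma reflV_apply (v x : L) : reflV v x = x + ip x v • v := rfl

lemma ip_reflV_left (u x y : L) : ip (reflV u x) y = ip x (reflV u y) := by
  rw [reflV_apply, reflV_apply, ip_add_left, ip_smul_left, ip_comm x (y + _), ip_add_left,
    ip_smul_left, ip_comm y, ip_comm u y, ip_comm u x]
  ring

lemma reflV_reflV {u : L} (hu : ip u u = -2) (x : L) : reflV u (reflV u x) = x := by
  simp only [reflV_apply, ip_add_left, ip_smul_left, hu]
  module

lemma reflV_comp_reflV_comp_reflV {u : L} (hu : ip u u = -2) (v : L) :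
    reflV u ∘ₗ reflV v ∘ₗ reflV u = reflV (reflV u v) := by
  refine LinearMap.ext fun x => ?_
  simp only [LinearMap.comp_apply]
  rw [reflV_apply v, map_add, map_smul, reflV_reflV hu, ip_reflV_left, reflV_apply (reflV u v)]

lemma w2_comp_w3_comp_w2 : w2 ∘ₗ w3 ∘ₗ w2 = reflV (al2 + al3) := by
  rw [w2, w3, reflV_comp_reflV_comp_reflV (by decide)]
  congr 1
  decide

lemma sq_eq_one_of_commute_of_mul_mul_eq {M : Type*} [Monoid M] {g r : M} (hr : r * r = 1)
    (hconj : g * (r * g) = r) (hc : Commute r g) : g * g = 1 :=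
  calc g * g = r * r * (g * g) := by rw [hr, one_mul]
    _ = r * (g * (r * g)) := by rw [← mul_assoc g, ← hc.eq]; simp only [mul_assoc]
    _ = 1 := by rw [hconj, hr]

lemma LinearMap.ext_of_apply_single {n R M : Type*} [Finite n] [DecidableEq n] [Semiring R]
    [AddCommMonoid M] [Module R M] {f g : (n → R) →ₗ[R] M}
    (h : ∀ i, f (Pi.single i 1) = g (Pi.single i 1)) : f = g :=
  (Pi.basisFun R n).ext fun i => by rw [Pi.basisFun_apply, h]

lemma eq_mulVecLin_of_apply_single {n R : Type*} [Fintype n] [DecidableEq n] [CommSemiring R]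
    (f : (n → R) →ₗ[R] n → R) (v : n → n → R) (hf : ∀ i, f (Pi.single i 1) = v i) :
    f = (Matrix.of v).transpose.mulVecLin :=
  LinearMap.ext_of_apply_single fun i => by
    rw [hf, Matrix.mulVecLin_apply, Matrix.mulVec_single_one]
    rfl

def phiImages : Fin 10 → L :=
  ![2 • H0 + H1 - E2 - E4 - E6 - E8, H0 + 2 • H1 - E2 - E4 - E6 - E8,
    H0 + H1 - E2 - E4 - E8, E5, H0 + H1 - E2 - E4 - E6, E7,
    H0 + H1 - E4 - E6 - E8, E1, H0 + H1 - E2 - E6 - E8, E3]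

def phi : L →ₗ[ℤ] L := (Matrix.of phiImages).transpose.mulVecLin

lemma phi_sq_comp_reflV_comp_phi_sq :
    (phi ∘ₗ phi) ∘ₗ reflV (al2 + al3) ∘ₗ (phi ∘ₗ phi) = reflV (al2 + al3) :=
  LinearMap.ext_of_apply_single (by decide)

lemma phi_sq_mul_phi_sq_ne_one : (phi ∘ₗ phi) * (phi ∘ₗ phi) ≠ 1 := fun h =>
  absurd (LinearMap.congr_fun h H0) (by decide)

/-- With `r₀ = w₂ ∘ w₃ ∘ w₂`, one has `φ² ∘ r₀ ∘ φ² = r₀`, i.e. `r₀` conjugates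
`φ²` to its inverse; in particular `r₀` does not commute with `φ²`. -/
theorem stmt_16
    (φ : L →ₗ[ℤ] L)
    (hφH0 : φ H0 = 2 • H0 + H1 - E2 - E4 - E6 - E8)
    (hφH1 : φ H1 = H0 + 2 • H1 - E2 - E4 - E6 - E8)
    (hφE1 : φ E1 = H0 + H1 - E2 - E4 - E8)
    (hφE2 : φ E2 = E5)
    (hφE3 : φ E3 = H0 + H1 - E2 - E4 - E6)
    (hφE4 : φ E4 = E7)
    (hφE5 : φ E5 = H0 + H1 - E4 - E6 - E8)
    (hφE6 : φ E6 = E1)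
    (hφE7 : φ E7 = H0 + H1 - E2 - E6 - E8)
    (hφE8 : φ E8 = E3) :
    (φ ∘ₗ φ) ∘ₗ (w2 ∘ₗ w3 ∘ₗ w2) ∘ₗ (φ ∘ₗ φ) = w2 ∘ₗ w3 ∘ₗ w2 ∧
    (w2 ∘ₗ w3 ∘ₗ w2) ∘ₗ (φ ∘ₗ φ) ≠ (φ ∘ₗ φ) ∘ₗ (w2 ∘ₗ w3 ∘ₗ w2) := by
  obtain rfl : φ = phi :=
    eq_mulVecLin_of_apply_single φ phiImages fun i => by
      fin_cases i
      exacts [hφH0, hφH1, hφE1, hφE2, hφE3, hφE4, hφE5, hφE6, hφE7, hφE8]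
  rw [w2_comp_w3_comp_w2]
  refine ⟨phi_sq_comp_reflV_comp_phi_sq, fun hcomm => phi_sq_mul_phi_sq_ne_one ?_⟩
  exact sq_eq_one_of_commute_of_mul_mul_eq (LinearMap.ext (reflV_reflV (by decide)))
    phi_sq_comp_reflV_comp_phi_sq hcomm
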